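/- arXiv:1203.0403 — 6 statements merged into one kernel-verified Lean document; each statement's English description precedes it below -/
import Mathlib

section
/- Let H be a real Hilbert space and H₁, …, H_d (d ≥ 1) closed subspaces of H such that (i) for all j ≠ k the operator from H_k to H sending f to Π_j f (the orthogonal projection of f onto H_j) is a compact operator, and (ii) whenever f_j ∈ H_j for each j and f₁ + ⋯ + f_d = 0, then f_j = 0 for all j. Then the subspace V = H₁ + ⋯ + H_d is closed in H and there exists a constant γ ∈ [0,1) such that ‖Q_d Q_{d−1} ⋯ Q_1 f‖ ≤ γ ‖f‖ for every f ∈ V. -/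
/-!
Let `T : ∏ⱼ Hⱼ → H` be the summation map and `Π f = (Π₁ f, …, Π_d f)`. The composite `Π ∘ T` is
the identity plus the compact cross terms `Πₖ|_{Hⱼ}`, `j ≠ k`, and it is injective: if every
`Πₖ (T x)` vanishes then `T x ∈ V ∩ Vᗮ`, so `T x = 0` and `x = 0` by independence. Compactness
upgrades injectivity to a lower bound `c ‖x‖ ≤ ‖Π (T x)‖ ≤ ‖T x‖`, so `V = range T` is closed and
`‖f‖ ≤ C ‖Π f‖` on `V`. Peeling off one `Qⱼ` at a time, Pythagoras gives
`‖Πⱼ f‖² ≤ 4ᵈ (‖f‖² - ‖Q f‖²)`; together these force `‖Q f‖² ≤ A / (A + 1) ‖f‖²` on `V`.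
-/

open Filter Topology Function

theorem ContinuousLinearMap.exists_pos_mul_norm_le_of_forall_ultrafilter
    {E F : Type*} [NormedAddCommGroup E] [NormedSpace ℝ E] [NormedAddCommGroup F]
    [NormedSpace ℝ F] (S : E →L[ℝ] F) (hS : Injective S)
    (h : ∀ (U : Ultrafilter ℕ) (x : ℕ → E), (∀ n, ‖x n‖ = 1) → Tendsto (S ∘ x) U (𝓝 0) →
      ∃ g, Tendsto x U (𝓝 g)) :
    ∃ c > 0, ∀ x, c * ‖x‖ ≤ ‖S x‖ := by
  by_contra! hS_small
  have hunit : ∀ n : ℕ, ∃ u : E, ‖u‖ = 1 ∧ ‖S u‖ < 1 / (n + 1) := by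
    intro n
    obtain ⟨x, hx⟩ := hS_small (1 / (n + 1)) Nat.one_div_pos_of_nat
    have hx0 : x ≠ 0 := by rintro rfl; simp at hx
    refine ⟨(‖x‖⁻¹ : ℝ) • x, norm_smul_inv_norm hx0, ?_⟩
    rwa [map_smul, norm_smul, norm_inv, norm_norm, inv_mul_lt_iff₀ (norm_pos_iff.2 hx0),
      mul_comm]
  choose u hu_norm hSu_lt using hunit
  have hSu : Tendsto (S ∘ u) atTop (𝓝 0) :=
    squeeze_zero_norm (fun n => (hSu_lt n).le) tendsto_one_div_add_atTop_nhds_zero_nat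
  have hU := Ultrafilter.of_le (atTop : Filter ℕ)
  obtain ⟨g, hg⟩ := h _ u hu_norm (hSu.mono_left hU)
  have hg_norm : ‖g‖ = 1 := tendsto_nhds_unique hg.norm (by simp [hu_norm])
  have hSg : S g = 0 := tendsto_nhds_unique ((S.continuous.tendsto g).comp hg) (hSu.mono_left hU)
  simp [hS (hSg.trans S.map_zero.symm)] at hg_norm

theorem IsCompactOperator.exists_tendsto_ultrafilter {E F : Type*} [NormedAddCommGroup E]
    [NormedSpace ℝ E] [NormedAddCommGroup F] [NormedSpace ℝ F] {T : E →ₗ[ℝ] F}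
    (hT : IsCompactOperator T) {α : Type*} (U : Ultrafilter α) {x : α → E} {R : ℝ}
    (hx : ∀ a, ‖x a‖ ≤ R) : ∃ w, Tendsto (T ∘ x) U (𝓝 w) := by
  obtain ⟨C, hC, hTC⟩ := hT.image_closedBall_subset_compact R
  obtain ⟨w, -, hw⟩ := hC.ultrafilter_le_nhds' (U.map (T ∘ x))
    (Ultrafilter.mem_map.2 <| univ_mem' fun a => hTC ⟨x a, mem_closedBall_zero_iff.2 (hx a), rfl⟩)
  exact ⟨w, hw⟩

section Family

variable {ι : Type*} {H : Type*} [NormedAddCommGroup H] [InnerProductSpace ℝ H]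
  (K : ι → Submodule ℝ H)

section Projections

variable [∀ i, (K i).HasOrthogonalProjection]

noncomputable def starProjectionPi : H →L[ℝ] (ι → H) :=
  ContinuousLinearMap.pi fun i => (K i).starProjection

lemma eq_zero_of_mem_iSup_of_starProjectionPi_eq_zero {f : H} (hf : f ∈ ⨆ i, K i)
    (h0 : starProjectionPi K f = 0) : f = 0 := by
  have hf' : f ∈ (⨆ i, K i)ᗮ := by
    rw [← Submodule.iInf_orthogonal, Submodule.mem_iInf]
    exact fun i => (Submodule.starProjection_apply_eq_zero_iff _).1 (congrFun h0 i)
  simpa using (Submodule.orthogonal_disjoint _).le_bot ⟨hf, hf'⟩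

variable [Fintype ι]

lemma norm_starProjectionPi_apply_le (f : H) : ‖starProjectionPi K f‖ ≤ ‖f‖ :=
  (pi_norm_le_iff_of_nonneg (norm_nonneg f)).2 fun i => (K i).norm_starProjection_apply_le f

end Projections

variable [Fintype ι]

def sumCLM : (Π i, K i) →L[ℝ] H := ∑ i, (K i).subtypeL.comp (ContinuousLinearMap.proj i)

@[simp]
lemma sumCLM_apply (x : Π i, K i) : sumCLM K x = ∑ i, (x i : H) := by
  simp [sumCLM]

lemma coe_iSup_eq_range_sumCLM :
    ((⨆ i, K i : Submodule ℝ H) : Set H) = Set.range (sumCLM K) := by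
  ext f
  simpa [eq_comm] using Submodule.mem_iSup_finset_iff_exists_sum (s := Finset.univ) K f

variable {K} in
lemma sumCLM_injective
    (hK : ∀ f : ι → H, (∀ i, f i ∈ K i) → ∑ i, f i = 0 → ∀ i, f i = 0) :
    Injective (sumCLM K) :=
  (injective_iff_map_eq_zero _).2 fun x hx => funext fun i =>
    Subtype.ext (hK (fun i => x i) (fun i => (x i).2) (by simpa using hx) i)

lemma sumCLM_apply_mem_iSup (x : Π i, K i) : sumCLM K x ∈ ⨆ i, K i := by
  rw [sumCLM_apply]
  exact Submodule.sum_mem _ fun i _ => Submodule.mem_iSup_of_mem i (x i).2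

variable [∀ i, (K i).HasOrthogonalProjection]

lemma injective_starProjectionPi_comp_sumCLM (hinj : Injective (sumCLM K)) :
    Injective ((starProjectionPi K).comp (sumCLM K)) :=
  (injective_iff_map_eq_zero _).2 fun x hx => hinj <| (map_zero (sumCLM K)).symm ▸
    eq_zero_of_mem_iSup_of_starProjectionPi_eq_zero K (sumCLM_apply_mem_iSup K x) hx

variable {K}

lemma exists_tendsto_of_tendsto_starProjectionPi_sumCLM
    (hcompact : ∀ j k, j ≠ k → IsCompactOperator (fun f : K k => (K j).starProjection (f : H)))
    {α : Type*} (U : Ultrafilter α) {y : α → Π i, K i} {R : ℝ} (hy : ∀ a, ‖y a‖ ≤ R)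
    (h : Tendsto (starProjectionPi K ∘ sumCLM K ∘ y) U (𝓝 0)) : ∃ g, Tendsto y U (𝓝 g) := by
  classical
  have hcross : ∀ j k, j ≠ k →
      ∃ w, Tendsto (fun a => (K j).starProjection (y a k : H)) U (𝓝 w) := by
    intro j k hjk
    have hjk' : IsCompactOperator ((K j).starProjection.toLinearMap ∘ₗ (K k).subtype) :=
      hcompact j k hjk
    exact hjk'.exists_tendsto_ultrafilter U fun a => (norm_le_pi_norm (y a) k).trans (hy a)
  choose! w hw using hcross
  have hdecomp : ∀ a k, (y a k : H) = (K k).starProjection (sumCLM K (y a)) -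
      ∑ j ∈ Finset.univ.erase k, (K k).starProjection (y a j : H) := by
    intro a k
    rw [sumCLM_apply, map_sum, ← Finset.add_sum_erase _ _ (Finset.mem_univ k),
      Submodule.starProjection_mem_subspace_eq_self, add_sub_cancel_right]
  have hlim : ∀ k, Tendsto (fun a => (y a k : H)) U (𝓝 (0 - ∑ j ∈ Finset.univ.erase k, w k j)) :=
    fun k => ((tendsto_pi_nhds.1 h k).sub (tendsto_finsetSum _ fun j hj =>
      hw k j (Finset.ne_of_mem_erase hj).symm)).congr fun a => (hdecomp a k).symm
  refine ⟨fun k => (K k).orthogonalProjectionOnto (0 - ∑ j ∈ Finset.univ.erase k, w k j),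
    tendsto_pi_nhds.2 fun k => ?_⟩
  exact (((K k).orthogonalProjectionOnto.continuous.tendsto _).comp (hlim k)).congr fun a =>
    (K k).orthogonalProjectionOnto_mem_subspace_eq_self (y a k)

lemma exists_pos_mul_norm_le_norm_starProjectionPi_sumCLM
    (hcompact : ∀ j k, j ≠ k → IsCompactOperator (fun f : K k => (K j).starProjection (f : H)))
    (hinj : Injective (sumCLM K)) :
    ∃ c > 0, ∀ x, c * ‖x‖ ≤ ‖starProjectionPi K (sumCLM K x)‖ :=
  ((starProjectionPi K).comp (sumCLM K)).exists_pos_mul_norm_le_of_forall_ultrafilter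
    (injective_starProjectionPi_comp_sumCLM K hinj) fun U _ hx h =>
      exists_tendsto_of_tendsto_starProjectionPi_sumCLM hcompact U (fun n => (hx n).le) h

lemma isClosed_iSup_of_isCompactOperator [∀ i, CompleteSpace (K i)]
    (hcompact : ∀ j k, j ≠ k → IsCompactOperator (fun f : K k => (K j).starProjection (f : H)))
    (hinj : Injective (sumCLM K)) :
    IsClosed ((⨆ i, K i : Submodule ℝ H) : Set H) := by
  obtain ⟨c, hc, hcx⟩ := exists_pos_mul_norm_le_norm_starProjectionPi_sumCLM hcompact hinj
  rw [coe_iSup_eq_range_sumCLM]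
  refine ((sumCLM K).antilipschitz_of_bound (K := (Real.toNNReal c)⁻¹) fun x => ?_).isClosed_range
    (sumCLM K).uniformContinuous
  rw [NNReal.coe_inv, Real.coe_toNNReal _ hc.le, le_inv_mul_iff₀ hc]
  exact (hcx x).trans (norm_starProjectionPi_apply_le K _)

lemma exists_norm_le_mul_norm_starProjectionPi
    (hcompact : ∀ j k, j ≠ k → IsCompactOperator (fun f : K k => (K j).starProjection (f : H)))
    (hinj : Injective (sumCLM K)) :
    ∃ C, ∀ f ∈ ⨆ i, K i, ‖f‖ ≤ C * ‖starProjectionPi K f‖ := by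
  obtain ⟨c, hc, hcx⟩ := exists_pos_mul_norm_le_norm_starProjectionPi_sumCLM hcompact hinj
  refine ⟨‖sumCLM K‖ / c, fun f hf => ?_⟩
  obtain ⟨x, rfl⟩ : f ∈ Set.range (sumCLM K) := coe_iSup_eq_range_sumCLM K ▸ hf
  calc ‖sumCLM K x‖ ≤ ‖sumCLM K‖ * ‖x‖ := (sumCLM K).le_opNorm x
    _ ≤ ‖sumCLM K‖ * (‖starProjectionPi K (sumCLM K x)‖ / c) := by
        gcongr
        rw [le_div_iff₀ hc, mul_comm]
        exact hcx x
    _ = ‖sumCLM K‖ / c * ‖starProjectionPi K (sumCLM K x)‖ := by ring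

end Family

section Sweep

variable {ι : Type*} {H : Type*} [NormedAddCommGroup H] [InnerProductSpace ℝ H]
  (K : ι → Submodule ℝ H) [∀ i, (K i).HasOrthogonalProjection]

noncomputable def orthogonalSweep (l : List ι) : H →L[ℝ] H :=
  (l.map fun i => (K i)ᗮ.starProjection).reverse.prod

lemma orthogonalSweep_cons_apply (i : ι) (l : List ι) (x : H) :
    orthogonalSweep K (i :: l) x = orthogonalSweep K l ((K i)ᗮ.starProjection x) := by
  simp [orthogonalSweep, List.prod_append]

lemma norm_orthogonalSweep_apply_le (l : List ι) (x : H) : ‖orthogonalSweep K l x‖ ≤ ‖x‖ := by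
  induction l generalizing x with
  | nil => simp [orthogonalSweep]
  | cons i l ih =>
    rw [orthogonalSweep_cons_apply]
    exact (ih _).trans ((K i)ᗮ.norm_starProjection_apply_le x)

lemma norm_starProjection_sq_le_of_mem (l : List ι) {j : ι} (hj : j ∈ l) (x : H) :
    ‖(K j).starProjection x‖ ^ 2 ≤ 4 ^ l.length * (‖x‖ ^ 2 - ‖orthogonalSweep K l x‖ ^ 2) := by
  induction l generalizing x with
  | nil => simp at hj
  | cons i l ih =>
    rw [orthogonalSweep_cons_apply, List.length_cons, pow_succ (4 : ℝ)]
    set y := (K i)ᗮ.starProjection x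
    have hpyth : ‖x‖ ^ 2 = ‖(K i).starProjection x‖ ^ 2 + ‖y‖ ^ 2 :=
      Submodule.norm_sq_eq_add_norm_sq_starProjection x (K i)
    have hrest := pow_le_pow_left₀ (norm_nonneg _) (norm_orthogonalSweep_apply_le K l y) 2
    have hpow : 1 ≤ (4 : ℝ) ^ l.length := one_le_pow₀ (by norm_num)
    rcases List.mem_cons.1 hj with rfl | hjl
    · nlinarith
    · have htri : ‖(K j).starProjection x‖ ≤ ‖(K i).starProjection x‖ + ‖(K j).starProjection y‖ :=
        calc ‖(K j).starProjection x‖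
            = ‖(K j).starProjection ((K i).starProjection x) + (K j).starProjection y‖ := by
              rw [← map_add, Submodule.starProjection_add_starProjection_orthogonal]
          _ ≤ ‖(K j).starProjection ((K i).starProjection x)‖ + ‖(K j).starProjection y‖ :=
              norm_add_le _ _
          _ ≤ ‖(K i).starProjection x‖ + ‖(K j).starProjection y‖ := by
              gcongr
              exact (K j).norm_starProjection_apply_le _
      have hy := ih hjl y
      nlinarith [pow_le_pow_left₀ (norm_nonneg _) htri 2,
        sq_nonneg (‖(K i).starProjection x‖ - ‖(K j).starProjection y‖)]

lemma norm_starProjectionPi_sq_le [Fintype ι] (l : List ι) (hl : ∀ i, i ∈ l) (x : H) :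
    ‖starProjectionPi K x‖ ^ 2 ≤ 4 ^ l.length * (‖x‖ ^ 2 - ‖orthogonalSweep K l x‖ ^ 2) := by
  have hB : 0 ≤ 4 ^ l.length * (‖x‖ ^ 2 - ‖orthogonalSweep K l x‖ ^ 2) :=
    mul_nonneg (by positivity) <| sub_nonneg.2 <|
      pow_le_pow_left₀ (norm_nonneg _) (norm_orthogonalSweep_apply_le K l x) 2
  refine (Real.le_sqrt (norm_nonneg _) hB).1 <|
    (pi_norm_le_iff_of_nonneg (Real.sqrt_nonneg _)).2 fun i => Real.le_sqrt_of_sq_le ?_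
  exact norm_starProjection_sq_le_of_mem K l (hl i) x

end Sweep

lemma exists_lt_one_norm_le_mul_of_norm_sq_le_mul_sub {E : Type*} [SeminormedAddCommGroup E]
    {Q : E → E} {V : Set E} {A : ℝ} (hA : 0 ≤ A) (hQ : ∀ f ∈ V, ‖Q f‖ ≤ ‖f‖)
    (h : ∀ f ∈ V, ‖f‖ ^ 2 ≤ A * (‖f‖ ^ 2 - ‖Q f‖ ^ 2)) :
    ∃ γ, 0 ≤ γ ∧ γ < 1 ∧ ∀ f ∈ V, ‖Q f‖ ≤ γ * ‖f‖ := by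
  refine ⟨√(A / (A + 1)), Real.sqrt_nonneg _,
    (Real.sqrt_lt' one_pos).2 (by rw [one_pow, div_lt_one (by positivity)]; linarith),
    fun f hf => ?_⟩
  rw [← Real.sqrt_sq (norm_nonneg f), ← Real.sqrt_mul (by positivity)]
  apply Real.le_sqrt_of_sq_le
  rw [div_mul_eq_mul_div, le_div_iff₀ (by positivity)]
  nlinarith [h f hf, pow_le_pow_left₀ (norm_nonneg _) (hQ f hf) 2]

theorem closed_sum_and_norm_contraction_of_compact_projections_general
    (d : ℕ)
    (H : Type*) [NormedAddCommGroup H] [InnerProductSpace ℝ H] [CompleteSpace H]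
    (Hsub : Fin d → Submodule ℝ H)
    (hclosed : ∀ j, IsClosed ((Hsub j : Set H)))
    (P : Fin d → (H →L[ℝ] H))
    (hP_mem : ∀ j x, P j x ∈ Hsub j)
    (hP_orth : ∀ j x, x - P j x ∈ (Hsub j)ᗮ)
    (hcompact : ∀ j k, j ≠ k → IsCompactOperator (fun f : Hsub k => P j (f : H)))
    (hindep : ∀ f : Fin d → H, (∀ j, f j ∈ Hsub j) → (∑ j, f j) = 0 → ∀ j, f j = 0) :
    IsClosed (((⨆ j, Hsub j : Submodule ℝ H) : Set H)) ∧
    ∃ γ : ℝ, 0 ≤ γ ∧ γ < 1 ∧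
      ∀ f ∈ (⨆ j, Hsub j : Submodule ℝ H),
        ‖((List.ofFn fun j : Fin d => (1 : H →L[ℝ] H) - P j).reverse.prod) f‖ ≤ γ * ‖f‖ := by
  have : ∀ j, CompleteSpace (Hsub j) := fun j => (hclosed j).completeSpace_coe
  obtain rfl : P = fun j => (Hsub j).starProjection := funext fun j =>
    ContinuousLinearMap.ext fun x =>
      ((Hsub j).eq_starProjection_of_mem_orthogonal (hP_mem j x) (hP_orth j x)).symm
  have hinj := sumCLM_injective hindep
  refine ⟨isClosed_iSup_of_isCompactOperator hcompact hinj, ?_⟩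
  obtain ⟨C, hC⟩ := exists_norm_le_mul_norm_starProjectionPi hcompact hinj
  have hsweep : (List.ofFn fun j => (1 : H →L[ℝ] H) - (Hsub j).starProjection).reverse.prod =
      orthogonalSweep Hsub (List.finRange d) := by
    simp [orthogonalSweep, List.ofFn_eq_map, Submodule.starProjection_orthogonal']
  rw [hsweep]
  refine exists_lt_one_norm_le_mul_of_norm_sq_le_mul_sub (A := C ^ 2 * 4 ^ d) (by positivity)
    (fun f _ => norm_orthogonalSweep_apply_le Hsub _ f) fun f hf => ?_
  calc ‖f‖ ^ 2 ≤ C ^ 2 * ‖starProjectionPi Hsub f‖ ^ 2 := by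
        rw [← mul_pow]
        exact pow_le_pow_left₀ (norm_nonneg f) (hC f hf) 2
    _ ≤ C ^ 2 * 4 ^ d * (‖f‖ ^ 2 - ‖orthogonalSweep Hsub (List.finRange d) f‖ ^ 2) := by
        rw [mul_assoc]
        gcongr
        simpa using norm_starProjectionPi_sq_le Hsub _ List.mem_finRange f

/-- Let `H` be a real Hilbert space and `H₁, …, H_d` (`d ≥ 1`) closed subspaces
of `H` such that (i) for all `j ≠ k` the operator from `H_k` to `H` sending `f` to `Π_j f`
(the orthogonal projection of `f` onto `H_j`) is a compact operator, and (ii) whenever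
`f_j ∈ H_j` for each `j` and `f₁ + ⋯ + f_d = 0`, then `f_j = 0` for all `j`.  Then the
subspace `V = H₁ + ⋯ + H_d` is closed in `H` and there exists a constant `γ ∈ [0,1)` such
that `‖Q_d Q_{d−1} ⋯ Q_1 f‖ ≤ γ ‖f‖` for every `f ∈ V`, where `Q_j = I − Π_j`. -/
theorem closed_sum_and_norm_contraction_of_compact_projections
    (d : ℕ) (hd : 1 ≤ d)
    (H : Type*) [NormedAddCommGroup H] [InnerProductSpace ℝ H] [CompleteSpace H]
    (Hsub : Fin d → Submodule ℝ H)
    (hclosed : ∀ j, IsClosed ((Hsub j : Set H)))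
    (P : Fin d → (H →L[ℝ] H))
    (hP_mem : ∀ j x, P j x ∈ Hsub j)
    (hP_orth : ∀ j x, x - P j x ∈ (Hsub j)ᗮ)
    (hcompact : ∀ j k, j ≠ k → IsCompactOperator (fun f : Hsub k => P j (f : H)))
    (hindep : ∀ f : Fin d → H, (∀ j, f j ∈ Hsub j) → (∑ j, f j) = 0 → ∀ j, f j = 0) :
    IsClosed (((⨆ j, Hsub j : Submodule ℝ H) : Set H)) ∧
    ∃ γ : ℝ, 0 ≤ γ ∧ γ < 1 ∧
      ∀ f ∈ (⨆ j, Hsub j : Submodule ℝ H),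
        ‖((List.ofFn fun j : Fin d => (1 : H →L[ℝ] H) - P j).reverse.prod) f‖ ≤ γ * ‖f‖ :=
  closed_sum_and_norm_contraction_of_compact_projections_general d H Hsub hclosed P hP_mem hP_orth
    hcompact hindep
end

section
/- For every u ∈ H, one has Q u = u (i.e., Q_d Q_{d−1} ⋯ Q_1 u = u) if and only if Π_j u = 0 for every j = 1, …, d, that is, if and only if u is orthogonal to each subspace H_j. -/
/-!
By Pythagoras `‖Q_j x‖² + ‖Π_j x‖² = ‖x‖²`, so each `Q_j` is a contraction and `‖Q_j x‖ = ‖x‖`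
forces `Π_j x = 0`, i.e. `Q_j x = x`. If `Q_d ⋯ Q_1 u = u`, the chain
`‖u‖ = ‖Q_d (Q_{d-1} ⋯ Q_1 u)‖ ≤ ‖Q_{d-1} ⋯ Q_1 u‖ ≤ ‖u‖` consists of equalities, so `Q_d` fixes
`Q_{d-1} ⋯ Q_1 u`, which is therefore `u`; induct on `d`.
-/

section ListProd

variable {R E : Type*} [Semiring R] [NormedAddCommGroup E] [Module R E]

theorem norm_list_prod_apply_le (M : List (E →L[R] E)) (hle : ∀ T ∈ M, ∀ x, ‖T x‖ ≤ ‖x‖)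
    (x : E) : ‖M.prod x‖ ≤ ‖x‖ := by
  induction M with
  | nil => simp
  | cons T M ih =>
    calc ‖(T :: M).prod x‖ = ‖T (M.prod x)‖ := rfl
      _ ≤ ‖M.prod x‖ := hle T List.mem_cons_self _
      _ ≤ ‖x‖ := ih fun S hS => hle S (List.mem_cons_of_mem T hS)

theorem list_prod_apply_eq_self_iff (M : List (E →L[R] E)) (hle : ∀ T ∈ M, ∀ x, ‖T x‖ ≤ ‖x‖)
    (hfix : ∀ T ∈ M, ∀ x, ‖T x‖ = ‖x‖ → T x = x) (u : E) :
    M.prod u = u ↔ ∀ T ∈ M, T u = u := by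
  induction M with
  | nil => simp
  | cons T M ih =>
    have hleM : ∀ S ∈ M, ∀ x, ‖S x‖ ≤ ‖x‖ := fun S hS => hle S (List.mem_cons_of_mem T hS)
    have hfixM : ∀ S ∈ M, ∀ x, ‖S x‖ = ‖x‖ → S x = x :=
      fun S hS => hfix S (List.mem_cons_of_mem T hS)
    rw [List.forall_mem_cons, ← ih hleM hfixM]
    change T (M.prod u) = u ↔ _
    constructor
    · intro h
      have hT : ‖T (M.prod u)‖ = ‖M.prod u‖ :=
        le_antisymm (hle T List.mem_cons_self _) (by
          calc ‖M.prod u‖ ≤ ‖u‖ := norm_list_prod_apply_le M hleM u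
            _ = ‖T (M.prod u)‖ := by rw [h])
      have hM : M.prod u = u := (hfix T List.mem_cons_self _ hT).symm.trans h
      exact ⟨by rwa [hM] at h, hM⟩
    · rintro ⟨hT, hM⟩
      rw [hM, hT]

end ListProd

section Orthogonal

variable {𝕜 E : Type*} [RCLike 𝕜] [NormedAddCommGroup E] [InnerProductSpace 𝕜 E]
  {K : Submodule 𝕜 E} {x y : E}

theorem norm_sub_sq_add_norm_sq_of_mem_orthogonal (hy : y ∈ K) (hxy : x - y ∈ Kᗮ) :
    ‖x - y‖ ^ 2 + ‖y‖ ^ 2 = ‖x‖ ^ 2 := by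
  have h := norm_add_sq_eq_norm_sq_add_norm_sq_of_inner_eq_zero y (x - y)
    ((K.mem_orthogonal _).mp hxy y hy)
  rw [add_sub_cancel] at h
  linear_combination -h

theorem norm_sub_le_of_mem_orthogonal (hy : y ∈ K) (hxy : x - y ∈ Kᗮ) : ‖x - y‖ ≤ ‖x‖ := by
  have h := norm_sub_sq_add_norm_sq_of_mem_orthogonal hy hxy
  exact (sq_le_sq₀ (norm_nonneg _) (norm_nonneg _)).mp (by linarith [sq_nonneg ‖y‖])

theorem eq_zero_of_norm_sub_eq_of_mem_orthogonal (hy : y ∈ K) (hxy : x - y ∈ Kᗮ)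
    (hnorm : ‖x - y‖ = ‖x‖) : y = 0 := by
  have h := norm_sub_sq_add_norm_sq_of_mem_orthogonal hy hxy
  rwa [hnorm, add_eq_left, sq_eq_zero_iff, norm_eq_zero] at h

theorem eq_zero_iff_mem_orthogonal (hy : y ∈ K) (hxy : x - y ∈ Kᗮ) : y = 0 ↔ x ∈ Kᗮ := by
  constructor
  · rintro rfl
    simpa using hxy
  · intro hx
    have hy' : y ∈ Kᗮ := by simpa using Kᗮ.sub_mem hx hxy
    exact (Submodule.disjoint_def.mp K.orthogonal_disjoint) y hy hy'

end Orthogonal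

theorem fixed_point_of_projection_product_iff_orthogonal_general
    (d : ℕ)
    (H : Type*) [NormedAddCommGroup H] [InnerProductSpace ℝ H]
    (Hsub : Fin d → Submodule ℝ H)
    (P : Fin d → (H →L[ℝ] H))
    (hP_mem : ∀ j x, P j x ∈ Hsub j)
    (hP_orth : ∀ j x, x - P j x ∈ (Hsub j)ᗮ)
    (u : H) :
    (((List.ofFn fun j : Fin d => (1 : H →L[ℝ] H) - P j).reverse.prod) u = u ↔
      ∀ j, P j u = 0) ∧
    ((∀ j, P j u = 0) ↔ ∀ j, u ∈ (Hsub j)ᗮ) := by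
  refine ⟨?_, forall_congr' fun j => eq_zero_iff_mem_orthogonal (hP_mem j u) (hP_orth j u)⟩
  rw [list_prod_apply_eq_self_iff]
  · simp [sub_eq_self]
  · simp only [List.mem_reverse, List.mem_ofFn]
    rintro _ ⟨j, rfl⟩ x
    exact norm_sub_le_of_mem_orthogonal (hP_mem j x) (hP_orth j x)
  · simp only [List.mem_reverse, List.mem_ofFn]
    rintro _ ⟨j, rfl⟩ x hx
    rw [sub_apply, one_apply_eq_self, sub_eq_self]
    exact eq_zero_of_norm_sub_eq_of_mem_orthogonal (hP_mem j x) (hP_orth j x) hx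

/-- For every `u ∈ H`, one has `Q u = u` (i.e. `Q_d Q_{d−1} ⋯ Q_1 u = u`)
if and only if `Π_j u = 0` for every `j = 1, …, d`, that is, if and only if `u` is
orthogonal to each subspace `H_j`.  Here `H` is a real Hilbert space, `H₁, …, H_d`
(`d ≥ 1`) are closed subspaces, `Π_j` is the orthogonal projection onto `H_j`, and
`Q_j = I − Π_j`. -/
theorem fixed_point_of_projection_product_iff_orthogonal
    (d : ℕ) (hd : 1 ≤ d)
    (H : Type*) [NormedAddCommGroup H] [InnerProductSpace ℝ H] [CompleteSpace H]
    (Hsub : Fin d → Submodule ℝ H)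
    (hclosed : ∀ j, IsClosed ((Hsub j : Set H)))
    (P : Fin d → (H →L[ℝ] H))
    (hP_mem : ∀ j x, P j x ∈ Hsub j)
    (hP_orth : ∀ j x, x - P j x ∈ (Hsub j)ᗮ)
    (u : H) :
    (((List.ofFn fun j : Fin d => (1 : H →L[ℝ] H) - P j).reverse.prod) u = u ↔
      ∀ j, P j u = 0) ∧
    ((∀ j, P j u = 0) ↔ ∀ j, u ∈ (Hsub j)ᗮ) :=
  fixed_point_of_projection_product_iff_orthogonal_general d H Hsub P hP_mem hP_orth u
end

section
/- Let g ∈ H and let m_k ∈ H_k for k = 1, …, d. Define recursively, for j = 1, …, d, m_j' = Π_j ( g − Σ_{k<j} m_k' − Σ_{k>j} m_k ). Then the updated elements m_j' lie in H_j and satisfy g − Σ_{j=1}^d m_j' = Q_d Q_{d−1} ⋯ Q_1 ( g − Σ_{j=1}^d m_j ). -/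
/-!
Let `r n` be the residual `g` minus the current fit after the first `n` updates of the sweep, so
`r 0 = g - ∑ m` and `r d = g - ∑ m'`. Update `j` only replaces `m j` by `m' j`, and since `Π_j`
fixes `m j ∈ H_j`, the new component is `m' j = m j + Π_j (r j)`. Hence `r (j + 1) = Q_j (r j)`,
and composing the `d` steps gives the product `Q_d ⋯ Q_1`.
-/

open Finset

theorem Finset.sum_Iio_add_add_sum_Ioi {ι M : Type*} [Fintype ι] [LinearOrder ι]
    [LocallyFiniteOrderBot ι] [LocallyFiniteOrderTop ι] [AddCommMonoid M] (f : ι → M) (j : ι) :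
    ∑ k ∈ Iio j, f k + f j + ∑ k ∈ Ioi j, f k = ∑ k, f k := by
  rw [sum_Iio_add_eq_sum_Iic, ← sum_filter_add_sum_filter_not univ (· ≤ j)]
  congr 2 <;> ext <;> simp

theorem List.prod_reverse_ofFn_smul {G α : Type*} [Monoid G] [MulAction G α] :
    ∀ {d : ℕ} (A : Fin d → G) (r : ℕ → α), (∀ j : Fin d, A j • r j = r (j + 1)) →
      (List.ofFn A).reverse.prod • r 0 = r d
  | 0, _, _, _ => by simp
  | d + 1, A, r, h => by
    rw [List.ofFn_succ', List.concat_eq_append, List.reverse_append, List.reverse_singleton,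
      List.singleton_append, List.prod_cons, mul_smul,
      List.prod_reverse_ofFn_smul _ r fun j => h j.castSucc]
    exact h (Fin.last d)

section

variable {M : Type*} [AddCommGroup M] {d : ℕ}

def backfitResidual (g : M) (m m' : Fin d → M) (n : ℕ) : M :=
  g - ∑ k : Fin d, if (k : ℕ) < n then m' k else m k

variable (g : M) (m m' : Fin d → M)

theorem backfitResidual_zero : backfitResidual g m m' 0 = g - ∑ k, m k := by
  simp [backfitResidual]

theorem backfitResidual_of_le {n : ℕ} (hn : d ≤ n) :
    backfitResidual g m m' n = g - ∑ k, m' k := by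
  simp [backfitResidual, fun k : Fin d => k.isLt.trans_le hn]

theorem backfitResidual_eq_of_le_of_le {j : Fin d} {n : ℕ} (hjn : j ≤ n) (hnj : n ≤ j + 1) :
    backfitResidual g m m' n =
      g - ∑ k ∈ Iio j, m' k - ∑ k ∈ Ioi j, m k - if (j : ℕ) < n then m' j else m j := by
  rw [backfitResidual, ← sum_Iio_add_add_sum_Ioi _ j]
  have hlt : ∀ k ∈ Iio j, (if (k : ℕ) < n then m' k else m k) = m' k := fun k hk =>
    if_pos ((Fin.lt_def.1 (mem_Iio.1 hk)).trans_le hjn)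
  have hgt : ∀ k ∈ Ioi j, (if (k : ℕ) < n then m' k else m k) = m k := fun k hk =>
    if_neg (not_lt.2 (hnj.trans (Fin.lt_def.1 (mem_Ioi.1 hk))))
  rw [sum_congr rfl hlt, sum_congr rfl hgt]
  abel

theorem sub_map_backfitResidual {F : Type*} [FunLike F M M] [AddMonoidHomClass F M M] (P : F)
    (j : Fin d) (hfix : P (m j) = m j)
    (hm' : m' j = P (g - ∑ k ∈ Iio j, m' k - ∑ k ∈ Ioi j, m k)) :
    backfitResidual g m m' j - P (backfitResidual g m m' j) = backfitResidual g m m' (j + 1) := by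
  rw [backfitResidual_eq_of_le_of_le g m m' le_rfl (Nat.le_succ _),
    backfitResidual_eq_of_le_of_le g m m' (j := j) (Nat.le_succ _) le_rfl, if_neg (lt_irrefl _),
    if_pos (Nat.lt_succ_self _), map_sub, hfix, ← hm']
  abel

end

theorem Submodule.eq_of_mem_of_sub_mem_orthogonal {𝕜 E : Type*} [RCLike 𝕜] [NormedAddCommGroup E]
    [InnerProductSpace 𝕜 E] {K : Submodule 𝕜 E} {x y : E} (hx : x ∈ K) (hy : y ∈ K)
    (hxy : x - y ∈ Kᗮ) : x = y :=
  sub_eq_zero.1 <| K.orthogonal_disjoint.le_bot ⟨K.sub_mem hx hy, hxy⟩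

theorem backfitting_sweep_eq_projection_product_general
    (d : ℕ)
    (H : Type*) [NormedAddCommGroup H] [InnerProductSpace ℝ H]
    (Hsub : Fin d → Submodule ℝ H)
    (P : Fin d → (H →L[ℝ] H))
    (hP_mem : ∀ j x, P j x ∈ Hsub j)
    (hP_orth : ∀ j x, x - P j x ∈ (Hsub j)ᗮ)
    (g : H) (m : Fin d → H) (hm : ∀ k, m k ∈ Hsub k)
    (m' : Fin d → H)
    (hm' : ∀ j, m' j =
      P j (g - ∑ k ∈ Finset.Iio j, m' k - ∑ k ∈ Finset.Ioi j, m k)) :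
    (∀ j, m' j ∈ Hsub j) ∧
    g - ∑ j, m' j =
      ((List.ofFn fun j : Fin d => (1 : H →L[ℝ] H) - P j).reverse.prod)
        (g - ∑ j, m j) := by
  refine ⟨fun j => hm' j ▸ hP_mem j _, ?_⟩
  have hfix (j : Fin d) : P j (m j) = m j :=
    (Submodule.eq_of_mem_of_sub_mem_orthogonal (hm j) (hP_mem j _) (hP_orth j (m j))).symm
  have hstep (j : Fin d) : ((1 : H →L[ℝ] H) - P j) • backfitResidual g m m' j =
      backfitResidual g m m' (j + 1) :=
    sub_map_backfitResidual g m m' (P j) j (hfix j) (hm' j)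
  have hsweep := List.prod_reverse_ofFn_smul _ _ hstep
  rw [backfitResidual_zero, backfitResidual_of_le g m m' le_rfl] at hsweep
  exact hsweep.symm

/-- Let `g ∈ H` and let `m_k ∈ H_k` for `k = 1, …, d`.  Define recursively,
for `j = 1, …, d`, `m_j' = Π_j ( g − Σ_{k<j} m_k' − Σ_{k>j} m_k )`.  Then the updated
elements `m_j'` lie in `H_j` and satisfy
`g − Σ_{j=1}^d m_j' = Q_d Q_{d−1} ⋯ Q_1 ( g − Σ_{j=1}^d m_j )`,
where `Π_j` is the orthogonal projection onto the closed subspace `H_j` of the real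
Hilbert space `H` and `Q_j = I − Π_j`. -/
theorem backfitting_sweep_eq_projection_product
    (d : ℕ) (hd : 1 ≤ d)
    (H : Type*) [NormedAddCommGroup H] [InnerProductSpace ℝ H] [CompleteSpace H]
    (Hsub : Fin d → Submodule ℝ H)
    (hclosed : ∀ j, IsClosed ((Hsub j : Set H)))
    (P : Fin d → (H →L[ℝ] H))
    (hP_mem : ∀ j x, P j x ∈ Hsub j)
    (hP_orth : ∀ j x, x - P j x ∈ (Hsub j)ᗮ)
    (g : H) (m : Fin d → H) (hm : ∀ k, m k ∈ Hsub k)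
    (m' : Fin d → H)
    (hm' : ∀ j, m' j =
      P j (g - ∑ k ∈ Finset.Iio j, m' k - ∑ k ∈ Finset.Ioi j, m k)) :
    (∀ j, m' j ∈ Hsub j) ∧
    g - ∑ j, m' j =
      ((List.ofFn fun j : Fin d => (1 : H →L[ℝ] H) - P j).reverse.prod)
        (g - ∑ j, m j) :=
  backfitting_sweep_eq_projection_product_general d H Hsub P hP_mem hP_orth g m hm m' hm'
end

section
/- Let g ∈ H and let m_j^{[0]} ∈ H_j for j = 1, …, d be given. For r = 1, 2, … define, for j = 1, …, d in order, m_j^{[r]} = Π_j ( g − Σ_{k<j} m_k^{[r]} − Σ_{k>j} m_k^{[r−1]} ), and set m^{[r]} = Σ_{j=1}^d m_j^{[r]}. Then for every r ≥ 1, m^{[r]} = Σ_{s=0}^{r−1} Q^s r̂ + Q^r m^{[0]}, where r̂ = (I − Q) g and Q^s denotes the s-fold composition of Q. -/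
/-!
One backfitting sweep updates the residual by `Q`: because `Π_j` fixes `m_j^{[r-1]} ∈ H_j`, the
`j`-th update turns the residual `g − Σ_{k<j} m_k^{[r]} − Σ_{k≥j} m_k^{[r−1]}` into its image under
`Q_j = I − Π_j`. Hence `g − m^{[r]} = Q^r (g − m^{[0]})`, and the geometric sum
`Σ_{s<r} Q^s (I − Q) = I − Q^r` rearranges this into the stated formula.
-/

open Finset

theorem Submodule.apply_eq_self_of_sub_mem_orthogonal {𝕜 E : Type*} [RCLike 𝕜]
    [NormedAddCommGroup E] [InnerProductSpace 𝕜 E] (K : Submodule 𝕜 E) {P : E → E} {x : E}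
    (hx : x ∈ K) (hPx : P x ∈ K) (horth : x - P x ∈ Kᗮ) : P x = x := by
  have hzero : x - P x ∈ K ⊓ Kᗮ := ⟨K.sub_mem hx hPx, horth⟩
  rw [K.inf_orthogonal_eq_bot, Submodule.mem_bot, sub_eq_zero] at hzero
  exact hzero.symm

theorem Fin.sum_Iio_succ {M : Type*} [AddCommMonoid M] {n : ℕ} (f : Fin (n + 1) → M)
    (j : Fin n) : ∑ k ∈ Iio j.succ, f k = f 0 + ∑ k ∈ Iio j, f k.succ := by
  have hIio : Iio j.succ = Finset.cons 0 ((Iio j).map (Fin.succEmb n)) (by simp) := by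
    ext k
    cases k using Fin.cases <;> simp
  rw [hIio, Finset.sum_cons, Finset.sum_map]
  rfl

section Sweep

variable {R E : Type*} [Ring R] [AddCommGroup E] [Module R E] [TopologicalSpace E]
  [IsTopologicalAddGroup E]

theorem ContinuousLinearMap.sum_range_pow_apply_sub_apply (f : E →L[R] E) (x : E) (r : ℕ) :
    ∑ s ∈ range r, (f ^ s) (x - f x) = x - (f ^ r) x := by
  have hgeom := congrArg (· x) (geom_sum_mul_neg f r)
  simpa [_root_.sum_apply] using hgeom

theorem sweep_residual {d : ℕ} (P : Fin d → E →L[R] E) (g : E) (old new : Fin d → E)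
    (hfix : ∀ j, P j (old j) = old j)
    (hnew : ∀ j, new j = P j (g - ∑ k ∈ Iio j, new k - ∑ k ∈ Ioi j, old k)) :
    (List.ofFn fun j => 1 - P j).reverse.prod (g - ∑ j, old j) = g - ∑ j, new j := by
  induction d generalizing g with
  | zero => simp
  | succ d ih =>
    have hfirst : (1 - P 0) (g - ∑ j, old j) = g - new 0 - ∑ j : Fin d, old j.succ := by
      have hnew0 := hnew 0
      rw [← bot_eq_zero, Iio_bot, sum_empty, sub_zero, bot_eq_zero, Fin.sum_Ioi_zero] at hnew0
      rw [Fin.sum_univ_succ, sub_apply, one_apply_eq_self, ← sub_sub, sub_right_comm g (old 0),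
        map_sub, hfix, ← hnew0]
      abel
    have htail := ih (fun j => P j.succ) (g - new 0) (fun j => old j.succ) (fun j => new j.succ)
      (fun j => hfix j.succ) (fun j => by
        rw [hnew j.succ, Fin.sum_Iio_succ, Fin.sum_Ioi_succ, sub_add_eq_sub_sub])
    rw [List.ofFn_succ, List.reverse_cons, List.prod_append, List.prod_singleton,
      mul_apply_eq_comp, hfirst, htail, Fin.sum_univ_succ, sub_add_eq_sub_sub]

end Sweep

theorem backfitting_iterates_formula_general
    (d : ℕ)
    (H : Type*) [NormedAddCommGroup H] [InnerProductSpace ℝ H]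
    (Hsub : Fin d → Submodule ℝ H)
    (P : Fin d → (H →L[ℝ] H))
    (hP_mem : ∀ j x, P j x ∈ Hsub j)
    (hP_orth : ∀ j x, x - P j x ∈ (Hsub j)ᗮ)
    (g : H) (M : ℕ → Fin d → H)
    (hM0 : ∀ j, M 0 j ∈ Hsub j)
    (hMrec : ∀ r : ℕ, ∀ j, M (r + 1) j =
      P j (g - ∑ k ∈ Finset.Iio j, M (r + 1) k - ∑ k ∈ Finset.Ioi j, M r k)) :
    ∀ r : ℕ, 1 ≤ r →
      (∑ j, M r j) =
        (∑ s ∈ Finset.range r,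
          (((List.ofFn fun j : Fin d => (1 : H →L[ℝ] H) - P j).reverse.prod) ^ s)
            (g - ((List.ofFn fun j : Fin d => (1 : H →L[ℝ] H) - P j).reverse.prod) g)) +
        ((((List.ofFn fun j : Fin d => (1 : H →L[ℝ] H) - P j).reverse.prod) ^ r)
          (∑ j, M 0 j)) := by
  intro r _
  set Q := (List.ofFn fun j : Fin d => (1 : H →L[ℝ] H) - P j).reverse.prod
  have hfix : ∀ r j, P j (M r j) = M r j := fun r j =>
    (Hsub j).apply_eq_self_of_sub_mem_orthogonal
      (by cases r with
        | zero => exact hM0 j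
        | succ r => rw [hMrec]; exact hP_mem j _)
      (hP_mem j _) (hP_orth j _)
  have hresidual : ∀ r, g - ∑ j, M r j = (Q ^ r) (g - ∑ j, M 0 j) := by
    intro r
    induction r with
    | zero => simp
    | succ r ih =>
      rw [pow_succ', mul_apply_eq_comp, ← ih,
        sweep_residual P g (M r) (M (r + 1)) (hfix r) (hMrec r)]
  rw [Q.sum_range_pow_apply_sub_apply, ← sub_sub_cancel g (∑ j, M r j), hresidual, map_sub]
  abel

/-- Let `g ∈ H` and let `m_j^{[0]} ∈ H_j` for `j = 1, …, d` be given.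
For `r = 1, 2, …` define, for `j = 1, …, d` in order,
`m_j^{[r]} = Π_j ( g − Σ_{k<j} m_k^{[r]} − Σ_{k>j} m_k^{[r−1]} )`, and set
`m^{[r]} = Σ_{j=1}^d m_j^{[r]}`.  Then for every `r ≥ 1`,
`m^{[r]} = Σ_{s=0}^{r−1} Q^s r̂ + Q^r m^{[0]}`, where `r̂ = (I − Q) g`,
`Q = Q_d ∘ ⋯ ∘ Q_1` with `Q_j = I − Π_j`, and `Q^s` is the `s`-fold composition. -/
theorem backfitting_iterates_formula
    (d : ℕ) (hd : 1 ≤ d)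
    (H : Type*) [NormedAddCommGroup H] [InnerProductSpace ℝ H] [CompleteSpace H]
    (Hsub : Fin d → Submodule ℝ H)
    (hclosed : ∀ j, IsClosed ((Hsub j : Set H)))
    (P : Fin d → (H →L[ℝ] H))
    (hP_mem : ∀ j x, P j x ∈ Hsub j)
    (hP_orth : ∀ j x, x - P j x ∈ (Hsub j)ᗮ)
    (g : H) (M : ℕ → Fin d → H)
    (hM0 : ∀ j, M 0 j ∈ Hsub j)
    (hMrec : ∀ r : ℕ, ∀ j, M (r + 1) j =
      P j (g - ∑ k ∈ Finset.Iio j, M (r + 1) k - ∑ k ∈ Finset.Ioi j, M r k)) :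
    ∀ r : ℕ, 1 ≤ r →
      (∑ j, M r j) =
        (∑ s ∈ Finset.range r,
          (((List.ofFn fun j : Fin d => (1 : H →L[ℝ] H) - P j).reverse.prod) ^ s)
            (g - ((List.ofFn fun j : Fin d => (1 : H →L[ℝ] H) - P j).reverse.prod) g)) +
        ((((List.ofFn fun j : Fin d => (1 : H →L[ℝ] H) - P j).reverse.prod) ^ r)
          (∑ j, M 0 j)) :=
  backfitting_iterates_formula_general d H Hsub P hP_mem hP_orth g M hM0 hMrec
end

section
/- Let K be a probability density function on ℝ supported on [−1,1], π ≥ 0 an integer, μ = (μ_0(K), …, μ_π(K))ᵀ and N₁ = (μ_{ℓ+ℓ'}(K))_{ℓ,ℓ'=0}^{π}. Let A be a d×d real symmetric positive definite matrix and D = diag(A_{11}, …, A_{dd}) the diagonal matrix of its diagonal entries. Then the (π+1)d × (π+1)d matrix A ⊗ (μ μᵀ) + D ⊗ (N₁ − μ μᵀ) is symmetric positive definite, where ⊗ denotes the Kronecker product. -/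
open MeasureTheory Matrix Kronecker

/-!
Write `P = μ μᵀ` and, for `x` indexed by `(i, ℓ)`, let `s i = μ ⬝ᵥ x(i, ·)`. The quadratic
form of `A ⊗ P` at `x` is `sᵀ A s`, while `D ⊗ (N₁ - P)` is positive semidefinite as a Kronecker
product of positive semidefinite matrices. If `s ≠ 0` the first term is positive; if `s = 0` the
`P`-parts vanish and the form equals that of `D ⊗ N₁`, which is positive definite.

For the moments, `vᵀ N₁ v` and `vᵀ (N₁ - P) v` are the second moment and the variance of the
polynomial `∑ v_ℓ u^ℓ` under the density `K`. The former is positive for `v ≠ 0`: a nonzero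
polynomial vanishes only on a null set, and `K` cannot be concentrated on one.
-/

namespace Matrix

variable {R m n : Type*} [CommSemiring R] [Fintype m] [Fintype n]

theorem dotProduct_kronecker_vecMulVec_mulVec (B : Matrix m m R) (μ ν : n → R)
    (x y : m × n → R) :
    x ⬝ᵥ ((B ⊗ₖ vecMulVec μ ν) *ᵥ y)
      = (fun i => μ ⬝ᵥ Function.curry x i) ⬝ᵥ (B *ᵥ fun j => ν ⬝ᵥ Function.curry y j) := by
  simp only [dotProduct, mulVec, kroneckerMap_apply, vecMulVec_apply, Fintype.sum_prod_type,
    Function.curry_apply, Finset.mul_sum, Finset.sum_mul]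
  refine Finset.sum_congr rfl fun i _ => ?_
  rw [Finset.sum_comm]
  refine Finset.sum_congr rfl fun j _ => ?_
  rw [Finset.sum_comm]
  exact Finset.sum_congr rfl fun _ _ => Finset.sum_congr rfl fun _ _ => by ring

theorem PosDef.kronecker_vecMulVec_add_kronecker_sub {A D : Matrix m m ℝ} {N : Matrix n n ℝ}
    {μ : n → ℝ} (hA : A.PosDef) (hD : D.PosDef) (hN : N.PosDef)
    (hNμ : (N - vecMulVec μ μ).PosSemidef) :
    (A ⊗ₖ vecMulVec μ μ + D ⊗ₖ (N - vecMulVec μ μ)).PosDef := by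
  have hAP : (A ⊗ₖ vecMulVec μ μ).PosSemidef :=
    hA.posSemidef.kronecker (posSemidef_vecMulVec_self_star μ)
  have hDC : (D ⊗ₖ (N - vecMulVec μ μ)).PosSemidef := hD.posSemidef.kronecker hNμ
  refine posDef_iff_dotProduct_mulVec.2 ⟨(hAP.add hDC).isHermitian, fun x hx => ?_⟩
  rw [star_trivial, add_mulVec, dotProduct_add, dotProduct_kronecker_vecMulVec_mulVec]
  set s := fun i => μ ⬝ᵥ Function.curry x i
  by_cases hs : s = 0
  · have hDP : x ⬝ᵥ ((D ⊗ₖ vecMulVec μ μ) *ᵥ x) = 0 := by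
      rw [dotProduct_kronecker_vecMulVec_mulVec]
      change s ⬝ᵥ (D *ᵥ s) = 0
      simp [hs]
    have hDN := (hD.kronecker hN).dotProduct_mulVec_pos hx
    rw [star_trivial, ← sub_add_cancel N (vecMulVec μ μ), kronecker_add, add_mulVec,
      dotProduct_add, hDP, add_zero] at hDN
    simpa [hs] using hDN
  · exact add_pos_of_pos_of_nonneg (by simpa using hA.dotProduct_mulVec_pos hs)
      (by simpa using hDC.dotProduct_mulVec_nonneg x)

end Matrix

theorem MeasureTheory.Integrable.continuous_mul_of_support_subset {K f : ℝ → ℝ} {s : Set ℝ}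
    (hK : Integrable K) (hs : IsCompact s) (hKs : Function.support K ⊆ s) (hf : Continuous f) :
    Integrable fun u => f u * K u := by
  have hfK : IntegrableOn (fun u => f u * K u) s :=
    hK.integrableOn.continuousOn_mul hf.continuousOn hs
  rwa [← integrable_indicator_iff hs.measurableSet,
    Set.indicator_eq_self.2 ((Function.support_mul_subset_right _ _).trans hKs)] at hfK

theorem ae_sum_mul_pow_ne_zero {n : ℕ} {v : Fin n → ℝ} (hv : v ≠ 0) :
    ∀ᵐ u : ℝ, ∑ i, v i * u ^ (i : ℕ) ≠ 0 := by
  classical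
  have hp : Polynomial.ofFn n v ≠ 0 := (map_ne_zero_iff _ (Polynomial.injective_ofFn n)).2 hv
  filter_upwards [(Polynomial.finite_setOfPred_isRoot hp).countable.ae_notMem volume] with u hu
  simpa [Polynomial.ofFn_eq_sum_monomial, Polynomial.eval_finsetSum] using hu

section WeightedIntegral

variable {α : Type*} [MeasurableSpace α] {ν : Measure α} {K f : α → ℝ}

theorem sq_integral_mul_le_integral_sq_mul (hK0 : ∀ u, 0 ≤ K u) (hK1 : ∫ u, K u ∂ν = 1)
    (hf : Integrable (fun u => f u * K u) ν) (hf2 : Integrable (fun u => f u ^ 2 * K u) ν) :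
    (∫ u, f u * K u ∂ν) ^ 2 ≤ ∫ u, f u ^ 2 * K u ∂ν := by
  set a := ∫ u, f u * K u ∂ν
  have hvar : ∫ u, (f u - a) ^ 2 * K u ∂ν = (∫ u, f u ^ 2 * K u ∂ν) - a ^ 2 := by
    have hexp : (fun u => (f u - a) ^ 2 * K u)
        = fun u => f u ^ 2 * K u - 2 * a * (f u * K u) + a ^ 2 * K u := by
      funext u; ring
    rw [hexp, integral_add (f := fun u => f u ^ 2 * K u - 2 * a * (f u * K u))
        (hf2.sub (hf.const_mul _)) ((integrable_of_integral_eq_one hK1).const_mul _),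
      integral_sub hf2 (hf.const_mul _), integral_const_mul, integral_const_mul, hK1]
    ring
  have : 0 ≤ ∫ u, (f u - a) ^ 2 * K u ∂ν :=
    integral_nonneg fun u => mul_nonneg (sq_nonneg _) (hK0 u)
  linarith

theorem integral_sq_mul_pos (hK0 : ∀ u, 0 ≤ K u) (hK1 : ∫ u, K u ∂ν ≠ 0)
    (hf2 : Integrable (fun u => f u ^ 2 * K u) ν) (hf : ∀ᵐ u ∂ν, f u ≠ 0) :
    0 < ∫ u, f u ^ 2 * K u ∂ν := by
  have hnonneg : 0 ≤ fun u => f u ^ 2 * K u := fun u => mul_nonneg (sq_nonneg _) (hK0 u)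
  refine (integral_nonneg hnonneg).lt_of_ne fun h => hK1 (integral_eq_zero_of_ae ?_)
  filter_upwards [(integral_eq_zero_iff_of_nonneg hnonneg hf2).1 h.symm, hf] with u hu hfu
  simpa [hfu] using hu

end WeightedIntegral

section Moments

variable {K : ℝ → ℝ} {n : ℕ}

noncomputable def momentVec (K : ℝ → ℝ) (n : ℕ) : Fin n → ℝ :=
  fun i => ∫ u, u ^ (i : ℕ) * K u

noncomputable def momentMatrix (K : ℝ → ℝ) (n : ℕ) : Matrix (Fin n) (Fin n) ℝ :=
  Matrix.of fun i j => ∫ u, u ^ ((i : ℕ) + j) * K u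

theorem integrable_sum_mul_pow_mul (hmom : ∀ k : ℕ, Integrable fun u => u ^ k * K u)
    (v : Fin n → ℝ) : Integrable fun u => (∑ i, v i * u ^ (i : ℕ)) * K u := by
  simp_rw [Finset.sum_mul, mul_assoc]
  exact integrable_finsetSum _ fun i _ => (hmom _).const_mul _

theorem momentVec_dotProduct (hmom : ∀ k : ℕ, Integrable fun u => u ^ k * K u)
    (v : Fin n → ℝ) :
    momentVec K n ⬝ᵥ v = ∫ u, (∑ i, v i * u ^ (i : ℕ)) * K u := by
  simp_rw [Finset.sum_mul, mul_assoc]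
  rw [integral_finsetSum _ fun i _ => (hmom _).const_mul _]
  simp only [integral_const_mul, dotProduct, momentVec, mul_comm]

theorem sum_mul_pow_sq_mul (v : Fin n → ℝ) (u c : ℝ) :
    (∑ i, v i * u ^ (i : ℕ)) ^ 2 * c = ∑ i, ∑ j, v i * v j * (u ^ ((i : ℕ) + j) * c) := by
  rw [sq, Finset.sum_mul_sum, Finset.sum_mul]
  refine Finset.sum_congr rfl fun i _ => ?_
  rw [Finset.sum_mul]
  exact Finset.sum_congr rfl fun j _ => by ring

theorem integrable_sum_mul_pow_sq_mul (hmom : ∀ k : ℕ, Integrable fun u => u ^ k * K u)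
    (v : Fin n → ℝ) : Integrable fun u => (∑ i, v i * u ^ (i : ℕ)) ^ 2 * K u := by
  simp_rw [sum_mul_pow_sq_mul]
  exact integrable_finsetSum _ fun i _ => integrable_finsetSum _ fun j _ =>
    (hmom _).const_mul _

theorem dotProduct_momentMatrix_mulVec (hmom : ∀ k : ℕ, Integrable fun u => u ^ k * K u)
    (v : Fin n → ℝ) :
    v ⬝ᵥ (momentMatrix K n *ᵥ v) = ∫ u, (∑ i, v i * u ^ (i : ℕ)) ^ 2 * K u := by
  simp_rw [sum_mul_pow_sq_mul]
  rw [integral_finsetSum _ fun i _ => integrable_finsetSum _ fun j _ => (hmom _).const_mul _]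
  refine Finset.sum_congr rfl fun i _ => ?_
  rw [integral_finsetSum _ fun j _ => (hmom _).const_mul _, mulVec, dotProduct, Finset.mul_sum]
  refine Finset.sum_congr rfl fun j _ => ?_
  rw [integral_const_mul, momentMatrix, of_apply]
  ring

theorem isHermitian_momentMatrix : (momentMatrix K n).IsHermitian := by
  ext i j
  simp [momentMatrix, add_comm]

theorem posDef_momentMatrix (hK0 : ∀ u, 0 ≤ K u) (hK1 : ∫ u, K u ≠ 0)
    (hmom : ∀ k : ℕ, Integrable fun u => u ^ k * K u) : (momentMatrix K n).PosDef := by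
  refine posDef_iff_dotProduct_mulVec.2 ⟨isHermitian_momentMatrix, fun v hv => ?_⟩
  rw [star_trivial, dotProduct_momentMatrix_mulVec hmom]
  exact integral_sq_mul_pos hK0 hK1 (integrable_sum_mul_pow_sq_mul hmom v)
    (ae_sum_mul_pow_ne_zero hv)

theorem posSemidef_momentMatrix_sub_vecMulVec (hK0 : ∀ u, 0 ≤ K u) (hK1 : ∫ u, K u = 1)
    (hmom : ∀ k : ℕ, Integrable fun u => u ^ k * K u) :
    (momentMatrix K n - vecMulVec (momentVec K n) (momentVec K n)).PosSemidef := by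
  have hP : (vecMulVec (momentVec K n) (momentVec K n)).IsHermitian := by
    simpa using (posSemidef_vecMulVec_self_star (momentVec K n)).isHermitian
  refine posSemidef_iff_dotProduct_mulVec.2 ⟨isHermitian_momentMatrix.sub hP, fun v => ?_⟩
  rw [star_trivial, sub_mulVec, dotProduct_sub, vecMulVec_mulVec, op_smul_eq_smul,
    dotProduct_smul, smul_eq_mul, dotProduct_comm v (momentVec K n), ← sq, sub_nonneg,
    momentVec_dotProduct hmom, dotProduct_momentMatrix_mulVec hmom]
  exact sq_integral_mul_le_integral_sq_mul hK0 hK1 (integrable_sum_mul_pow_mul hmom v)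
    (integrable_sum_mul_pow_sq_mul hmom v)

end Moments

theorem kronecker_moment_matrix_posDef_general
    (K : ℝ → ℝ) (hKnonneg : ∀ u, 0 ≤ K u)
    (hKint : ∫ u : ℝ, K u = 1)
    (hKsupp : ∀ u : ℝ, u ∉ Set.Icc (-1 : ℝ) 1 → K u = 0)
    (π : ℕ)
    (μvec : Fin (π + 1) → ℝ)
    (hμ : ∀ ℓ : Fin (π + 1), μvec ℓ = ∫ u : ℝ, u ^ (ℓ : ℕ) * K u)
    (N₁ : Matrix (Fin (π + 1)) (Fin (π + 1)) ℝ)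
    (hN₁ : ∀ ℓ ℓ' : Fin (π + 1), N₁ ℓ ℓ' = ∫ u : ℝ, u ^ ((ℓ : ℕ) + (ℓ' : ℕ)) * K u)
    (d : ℕ)
    (A : Matrix (Fin d) (Fin d) ℝ) (hA : A.PosDef)
    (D : Matrix (Fin d) (Fin d) ℝ) (hD : D = Matrix.diagonal (fun j => A j j)) :
    (A ⊗ₖ vecMulVec μvec μvec + D ⊗ₖ (N₁ - vecMulVec μvec μvec)).PosDef := by
  have hmom (k : ℕ) : Integrable fun u => u ^ k * K u :=
    (integrable_of_integral_eq_one hKint).continuous_mul_of_support_subset isCompact_Icc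
      (Function.support_subset_iff'.2 hKsupp) (continuous_pow k)
  obtain rfl : μvec = momentVec K (π + 1) := funext hμ
  obtain rfl : N₁ = momentMatrix K (π + 1) := Matrix.ext hN₁
  subst hD
  exact hA.kronecker_vecMulVec_add_kronecker_sub (posDef_diagonal_iff.2 fun _ => hA.diag_pos)
    (posDef_momentMatrix hKnonneg (by simp [hKint]) hmom)
    (posSemidef_momentMatrix_sub_vecMulVec hKnonneg hKint hmom)

/-- Let `K` be a probability density function on `ℝ` supported on `[−1,1]`,
`π ≥ 0` an integer, `μ = (μ_0(K), …, μ_π(K))ᵀ` and `N₁ = (μ_{ℓ+ℓ'}(K))_{ℓ,ℓ'=0}^{π}`.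
Let `A` be a `d×d` real symmetric positive definite matrix and
`D = diag(A_{11}, …, A_{dd})` the diagonal matrix of its diagonal entries.  Then the
`(π+1)d × (π+1)d` matrix `A ⊗ (μ μᵀ) + D ⊗ (N₁ − μ μᵀ)` is symmetric positive definite,
where `⊗` denotes the Kronecker product. -/
theorem kronecker_moment_matrix_posDef
    (K : ℝ → ℝ) (hKmeas : Measurable K) (hKnonneg : ∀ u, 0 ≤ K u)
    (hKint : ∫ u : ℝ, K u = 1)
    (hKsupp : ∀ u : ℝ, u ∉ Set.Icc (-1 : ℝ) 1 → K u = 0)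
    (π : ℕ)
    (μvec : Fin (π + 1) → ℝ)
    (hμ : ∀ ℓ : Fin (π + 1), μvec ℓ = ∫ u : ℝ, u ^ (ℓ : ℕ) * K u)
    (N₁ : Matrix (Fin (π + 1)) (Fin (π + 1)) ℝ)
    (hN₁ : ∀ ℓ ℓ' : Fin (π + 1), N₁ ℓ ℓ' = ∫ u : ℝ, u ^ ((ℓ : ℕ) + (ℓ' : ℕ)) * K u)
    (d : ℕ) (hd : 1 ≤ d)
    (A : Matrix (Fin d) (Fin d) ℝ) (hA : A.PosDef)
    (D : Matrix (Fin d) (Fin d) ℝ) (hD : D = Matrix.diagonal (fun j => A j j)) :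
    (A ⊗ₖ vecMulVec μvec μvec + D ⊗ₖ (N₁ - vecMulVec μvec μvec)).PosDef :=
  kronecker_moment_matrix_posDef_general K hKnonneg hKint hKsupp π μvec hμ N₁ hN₁ d A hA D hD
end

section
/- Let (X, Z) be a random vector with X = (X₁, …, X_d) and Z = (Z₁, …, Z_d) taking values in ℝ^d × ℝ^d, with E|Z|² < ∞, and suppose there is c > 0 such that almost surely vᵀ E[Z Zᵀ | X] v ≥ c |v|² for all v ∈ ℝ^d. Let f₁, …, f_d : ℝ → ℝ be measurable with E[f_j(X_j)²] < ∞ for each j and E[(Σ_{j=1}^d f_j(X_j) Z_j)²] < ∞. Then E[(Σ_{j=1}^d f_j(X_j) Z_j)²] ≥ c Σ_{j=1}^d E[f_j(X_j)²]; in particular, if Σ_{j=1}^d f_j(X_j) Z_j = 0 almost surely, then f_j(X_j) = 0 almost surely for every j. -/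
/-!
Let `m = σ(X)` and `g j = f j (X j)`, which is `m`-measurable. Expanding the square and pulling
the `m`-measurable factors out of the conditional expectation gives
`E[(∑ j, g j Z j)²] = E[∑ j k, g j g k E[Z j Z k | X]] ≥ c ∑ j, E[g j²]`, the inequality being the
ellipticity hypothesis applied pointwise to `v = g(ω)`. The pull-out property needs bounded
factors, so one first restricts to the events `{∑ j, ‖g j‖ ≤ M}` and lets `M → ∞`. If
`∑ j, g j Z j = 0` a.s., the bound forces `E[g j²] = 0` for every `j`.
-/

open MeasureTheory Filter Topology

section

variable {Ω ι : Type*} {m mΩ : MeasurableSpace Ω} {μ : Measure Ω}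

theorem integrable_mul_of_integrable_sum_sq [Fintype ι] {Z : Ω → ι → ℝ}
    (hZ : ∀ j, AEStronglyMeasurable (fun ω => Z ω j) μ)
    (hZ2 : Integrable (fun ω => ∑ j, Z ω j ^ 2) μ) (j k : ι) :
    Integrable (fun ω => Z ω j * Z ω k) μ := by
  have hmemLp : ∀ j, MemLp (fun ω => Z ω j) 2 μ := fun j =>
    (memLp_two_iff_integrable_sq (hZ j)).2 <| hZ2.mono' ((hZ j).pow 2) <| ae_of_all _ fun ω => by
      rw [Real.norm_of_nonneg (sq_nonneg _)]
      exact Finset.single_le_sum (fun l _ => sq_nonneg (Z ω l)) (Finset.mem_univ j)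
  exact (hmemLp j).integrable_mul (hmemLp k)

theorem integral_mul_condExp_of_bound (hm : m ≤ mΩ) [IsFiniteMeasure μ] {f g : Ω → ℝ}
    (hf : StronglyMeasurable[m] f) (hg : Integrable g μ) (C : ℝ) (hf_bound : ∀ ω, ‖f ω‖ ≤ C) :
    ∫ ω, f ω * (μ[g | m]) ω ∂μ = ∫ ω, f ω * g ω ∂μ := by
  rw [← integral_condExp hm (f := fun ω => f ω * g ω)]
  exact integral_congr_ae
    (condExp_stronglyMeasurable_mul_of_bound hm hf hg C (ae_of_all _ hf_bound)).symm

section Ellipticity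

variable [Fintype ι] {Z : Ω → ι → ℝ} {c : ℝ}

theorem mul_sum_integral_sq_le_integral_sq_sum_of_bound (hm : m ≤ mΩ) [IsFiniteMeasure μ]
    (hZZ : ∀ j k, Integrable (fun ω => Z ω j * Z ω k) μ)
    (hcond : ∀ᵐ ω ∂μ, ∀ v : ι → ℝ,
      c * ∑ k, v k ^ 2 ≤ ∑ j, ∑ k, v j * v k * (μ[fun ω' => Z ω' j * Z ω' k | m]) ω)
    {h : ι → Ω → ℝ} (hh : ∀ j, StronglyMeasurable[m] (h j)) (C : ℝ)
    (hC : ∀ j ω, ‖h j ω‖ ≤ C) :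
    c * ∑ j, ∫ ω, h j ω ^ 2 ∂μ ≤ ∫ ω, (∑ j, h j ω * Z ω j) ^ 2 ∂μ := by
  have hprod : ∀ j k, StronglyMeasurable[m] (fun ω => h j ω * h k ω) := fun j k =>
    (hh j).mul (hh k)
  have hbound : ∀ j k ω, ‖h j ω * h k ω‖ ≤ C * C := fun j k ω => by
    rw [norm_mul]
    exact mul_le_mul (hC j ω) (hC k ω) (norm_nonneg _) ((norm_nonneg _).trans (hC j ω))
  have hint_sq : ∀ j, Integrable (fun ω => h j ω ^ 2) μ := fun j =>
    Integrable.of_bound (((hh j).mono hm).aestronglyMeasurable.pow 2) (C * C)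
      (ae_of_all _ fun ω => by simpa only [sq] using hbound j j ω)
  have hint_condExp : ∀ j k, Integrable
      (fun ω => h j ω * h k ω * (μ[fun ω' => Z ω' j * Z ω' k | m]) ω) μ := fun j k =>
    integrable_condExp.bdd_mul ((hprod j k).mono hm).aestronglyMeasurable
      (ae_of_all _ (hbound j k))
  have hint_Z : ∀ j k, Integrable (fun ω => h j ω * h k ω * (Z ω j * Z ω k)) μ := fun j k =>
    (hZZ j k).bdd_mul ((hprod j k).mono hm).aestronglyMeasurable (ae_of_all _ (hbound j k))
  calc c * ∑ j, ∫ ω, h j ω ^ 2 ∂μ = ∫ ω, c * ∑ j, h j ω ^ 2 ∂μ := by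
        rw [integral_const_mul, integral_finsetSum _ fun j _ => hint_sq j]
    _ ≤ ∫ ω, ∑ j, ∑ k, h j ω * h k ω * (μ[fun ω' => Z ω' j * Z ω' k | m]) ω ∂μ :=
        integral_mono_ae ((integrable_finsetSum _ fun j _ => hint_sq j).const_mul c)
          (integrable_finsetSum _ fun j _ => integrable_finsetSum _ fun k _ => hint_condExp j k)
          (hcond.mono fun ω hω => hω (h · ω))
    _ = ∑ j, ∑ k, ∫ ω, h j ω * h k ω * (Z ω j * Z ω k) ∂μ := by
        rw [integral_finsetSum _ fun j _ => integrable_finsetSum _ fun k _ => hint_condExp j k]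
        refine Finset.sum_congr rfl fun j _ => ?_
        rw [integral_finsetSum _ fun k _ => hint_condExp j k]
        exact Finset.sum_congr rfl fun k _ =>
          integral_mul_condExp_of_bound hm (hprod j k) (hZZ j k) _ (hbound j k)
    _ = ∫ ω, ∑ j, ∑ k, h j ω * h k ω * (Z ω j * Z ω k) ∂μ := by
        rw [integral_finsetSum _ fun j _ => integrable_finsetSum _ fun k _ => hint_Z j k]
        exact Finset.sum_congr rfl fun j _ =>
          (integral_finsetSum _ fun k _ => hint_Z j k).symm
    _ = ∫ ω, (∑ j, h j ω * Z ω j) ^ 2 ∂μ := by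
        refine integral_congr_ae (ae_of_all _ fun ω => ?_)
        simp only [sq, Finset.sum_mul_sum]
        exact Finset.sum_congr rfl fun j _ => Finset.sum_congr rfl fun k _ => by ring

theorem mul_sum_integral_sq_le_integral_sq_sum (hm : m ≤ mΩ) [IsFiniteMeasure μ]
    (hZZ : ∀ j k, Integrable (fun ω => Z ω j * Z ω k) μ)
    (hcond : ∀ᵐ ω ∂μ, ∀ v : ι → ℝ,
      c * ∑ k, v k ^ 2 ≤ ∑ j, ∑ k, v j * v k * (μ[fun ω' => Z ω' j * Z ω' k | m]) ω)
    {g : ι → Ω → ℝ} (hg : ∀ j, StronglyMeasurable[m] (g j))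
    (hg2 : ∀ j, Integrable (fun ω => g j ω ^ 2) μ)
    (hsq : Integrable (fun ω => (∑ j, g j ω * Z ω j) ^ 2) μ) :
    c * ∑ j, ∫ ω, g j ω ^ 2 ∂μ ≤ ∫ ω, (∑ j, g j ω * Z ω j) ^ 2 ∂μ := by
  let A : ℕ → Set Ω := fun M => {ω | ∑ j, ‖g j ω‖ ≤ M}
  have hA_meas : ∀ M, MeasurableSet[m] (A M) := fun M =>
    (Finset.stronglyMeasurable_fun_sum _ fun j _ => (hg j).norm).measurableSet_le
      stronglyMeasurable_const
  have hA_mono : Monotone A := fun _ _ hMN _ hω => le_trans (α := ℝ) hω (Nat.cast_le.2 hMN)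
  have hA_iUnion : ⋃ M, A M = Set.univ :=
    Set.iUnion_eq_univ_iff.2 fun ω => exists_nat_ge (∑ j, ‖g j ω‖)
  have htrunc : ∀ M : ℕ,
      c * ∑ j, ∫ ω in A M, g j ω ^ 2 ∂μ ≤ ∫ ω, (∑ j, g j ω * Z ω j) ^ 2 ∂μ := by
    intro M
    have hbound : ∀ j ω, ‖(A M).indicator (g j) ω‖ ≤ M := fun j ω => by
      by_cases hω : ω ∈ A M
      · rw [Set.indicator_of_mem hω]
        exact (Finset.single_le_sum (fun k _ => norm_nonneg (g k ω)) (Finset.mem_univ j)).trans hω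
      · rw [Set.indicator_of_notMem hω, norm_zero]
        exact Nat.cast_nonneg M
    have hsq_ind : ∀ j ω,
        (A M).indicator (g j) ω ^ 2 = (A M).indicator (fun ω => g j ω ^ 2) ω := fun j ω => by
      by_cases hω : ω ∈ A M <;> simp [hω]
    have hsum_ind : ∀ ω, (∑ j, (A M).indicator (g j) ω * Z ω j) ^ 2 =
        (A M).indicator (fun ω => (∑ j, g j ω * Z ω j) ^ 2) ω := fun ω => by
      by_cases hω : ω ∈ A M <;> simp [hω]
    have key := mul_sum_integral_sq_le_integral_sq_sum_of_bound hm hZZ hcond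
      (fun j => (hg j).indicator (hA_meas M)) M hbound
    simp only [hsq_ind, hsum_ind, integral_indicator (hm _ (hA_meas M))] at key
    exact key.trans (setIntegral_le_integral hsq (ae_of_all _ fun ω => sq_nonneg _))
  have hlim : Tendsto (fun M : ℕ => c * ∑ j, ∫ ω in A M, g j ω ^ 2 ∂μ) atTop
      (𝓝 (c * ∑ j, ∫ ω, g j ω ^ 2 ∂μ)) := by
    refine (tendsto_finsetSum _ fun j _ => ?_).const_mul c
    have := tendsto_setIntegral_of_monotone (fun M => hm _ (hA_meas M)) hA_mono
      (hg2 j).integrableOn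
    rwa [hA_iUnion, Measure.restrict_univ] at this
  exact le_of_tendsto' hlim htrunc

end Ellipticity

theorem ae_eq_zero_of_mul_sum_integral_sq_nonpos [Fintype ι] {g : ι → Ω → ℝ}
    (hg2 : ∀ j, Integrable (fun ω => g j ω ^ 2) μ) {c : ℝ} (hc : 0 < c)
    (h : c * ∑ j, ∫ ω, g j ω ^ 2 ∂μ ≤ 0) (j : ι) : ∀ᵐ ω ∂μ, g j ω = 0 := by
  have hnonneg : ∀ j, 0 ≤ ∫ ω, g j ω ^ 2 ∂μ := fun j => integral_nonneg fun ω => sq_nonneg _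
  have hsum : ∑ j, ∫ ω, g j ω ^ 2 ∂μ = 0 :=
    le_antisymm (nonpos_of_mul_nonpos_right h hc) (Finset.sum_nonneg fun j _ => hnonneg j)
  have hj : ∫ ω, g j ω ^ 2 ∂μ = 0 :=
    (Finset.sum_eq_zero_iff_of_nonneg fun j _ => hnonneg j).1 hsum j (Finset.mem_univ j)
  filter_upwards [(integral_eq_zero_iff_of_nonneg (fun ω => sq_nonneg (g j ω)) (hg2 j)).1 hj]
    with ω hω
  exact pow_eq_zero_iff two_ne_zero |>.1 hω

end

theorem no_concurvity_second_moment_bound_general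
    (d : ℕ)
    (Ω : Type*) [MeasurableSpace Ω] (μ : MeasureTheory.Measure Ω)
    [IsProbabilityMeasure μ]
    (X Z : Ω → (Fin d → ℝ)) (hX : Measurable X) (hZ : Measurable Z)
    (hZ2 : Integrable (fun ω => ∑ j, (Z ω j) ^ 2) μ)
    (c : ℝ) (hc : 0 < c)
    (hcond : ∀ᵐ ω ∂μ, ∀ v : Fin d → ℝ,
      c * ∑ k, (v k) ^ 2 ≤
        ∑ j, ∑ k, v j * v k *
          ((μ[(fun ω' => Z ω' j * Z ω' k) |
            MeasurableSpace.comap X MeasurableSpace.pi]) ω))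
    (f : Fin d → ℝ → ℝ) (hf : ∀ j, Measurable (f j))
    (hfX2 : ∀ j, Integrable (fun ω => (f j (X ω j)) ^ 2) μ)
    (hsq : Integrable (fun ω => (∑ j, f j (X ω j) * Z ω j) ^ 2) μ) :
    c * ∑ j, ∫ ω, (f j (X ω j)) ^ 2 ∂μ ≤
      ∫ ω, (∑ j, f j (X ω j) * Z ω j) ^ 2 ∂μ ∧
    ((∀ᵐ ω ∂μ, ∑ j, f j (X ω j) * Z ω j = 0) →
      ∀ j, ∀ᵐ ω ∂μ, f j (X ω j) = 0) := by
  have hg : ∀ j, StronglyMeasurable[MeasurableSpace.comap X MeasurableSpace.pi]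
      (fun ω => f j (X ω j)) := fun j =>
    ((hf j).comp ((measurable_pi_apply j).comp (comap_measurable X))).stronglyMeasurable
  have hZZ := integrable_mul_of_integrable_sum_sq (Z := Z)
    (fun j => ((measurable_pi_apply j).comp hZ).aestronglyMeasurable) hZ2
  have hbound := mul_sum_integral_sq_le_integral_sq_sum hX.comap_le hZZ hcond hg hfX2 hsq
  refine ⟨hbound, fun hzero => ae_eq_zero_of_mul_sum_integral_sq_nonpos hfX2 hc ?_⟩
  have hS : ∫ ω, (∑ j, f j (X ω j) * Z ω j) ^ 2 ∂μ = 0 :=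
    integral_eq_zero_of_ae (hzero.mono fun ω hω => by simp [hω])
  rwa [hS] at hbound

/-- Let `(X, Z)` be a random vector with `X = (X₁, …, X_d)` and
`Z = (Z₁, …, Z_d)` taking values in `ℝ^d × ℝ^d`, with `E|Z|² < ∞`, and suppose there is
`c > 0` such that almost surely `vᵀ E[Z Zᵀ | X] v ≥ c |v|²` for all `v ∈ ℝ^d`.  Let
`f₁, …, f_d : ℝ → ℝ` be measurable with `E[f_j(X_j)²] < ∞` for each `j` and
`E[(Σ_j f_j(X_j) Z_j)²] < ∞`.  Then
`E[(Σ_j f_j(X_j) Z_j)²] ≥ c Σ_j E[f_j(X_j)²]`; in particular, if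
`Σ_j f_j(X_j) Z_j = 0` almost surely, then `f_j(X_j) = 0` almost surely for every `j`. -/
theorem no_concurvity_second_moment_bound
    (d : ℕ) (hd : 1 ≤ d)
    (Ω : Type*) [MeasurableSpace Ω] (μ : MeasureTheory.Measure Ω)
    [IsProbabilityMeasure μ]
    (X Z : Ω → (Fin d → ℝ)) (hX : Measurable X) (hZ : Measurable Z)
    (hZ2 : Integrable (fun ω => ∑ j, (Z ω j) ^ 2) μ)
    (c : ℝ) (hc : 0 < c)
    (hcond : ∀ᵐ ω ∂μ, ∀ v : Fin d → ℝ,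
      c * ∑ k, (v k) ^ 2 ≤
        ∑ j, ∑ k, v j * v k *
          ((μ[(fun ω' => Z ω' j * Z ω' k) |
            MeasurableSpace.comap X MeasurableSpace.pi]) ω))
    (f : Fin d → ℝ → ℝ) (hf : ∀ j, Measurable (f j))
    (hfX2 : ∀ j, Integrable (fun ω => (f j (X ω j)) ^ 2) μ)
    (hsq : Integrable (fun ω => (∑ j, f j (X ω j) * Z ω j) ^ 2) μ) :
    c * ∑ j, ∫ ω, (f j (X ω j)) ^ 2 ∂μ ≤
      ∫ ω, (∑ j, f j (X ω j) * Z ω j) ^ 2 ∂μ ∧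
    ((∀ᵐ ω ∂μ, ∑ j, f j (X ω j) * Z ω j = 0) →
      ∀ j, ∀ᵐ ω ∂μ, f j (X ω j) = 0) :=
  no_concurvity_second_moment_bound_general d Ω μ X Z hX hZ hZ2 c hc hcond f hf hfX2 hsq
end
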